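/- Let (μ(·), z(·)) be an admissible pair of the averaged system such that for every continuous h̃ : F → ℝ the limit lim_{T→∞} (1/T) ∫₀^T h̃(μ(t), z(t)) dt exists, defining a measure p ∈ 𝒫(F) via ∫_F h̃ dp = lim_{T→∞} (1/T) ∫₀^T h̃(μ(t), z(t)) dt. Then ∫_F ∇ψ(z)ᵀ g̃(μ, z) dp(μ, z) = 0 for every ψ ∈ C¹(ℝⁿ). -/

import Mathlib

/-!
Along the trajectory, `h (μ, z) = ⟪∇ψ z, g̃ μ z⟫` is exactly `(ψ ∘ z)'`, so its time average over
`[0, T]` is `(ψ (z T) - ψ (z 0)) / T`, which tends to `0` because `ψ` is bounded on `Z`. As `h` is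
continuous, the hypothesis on `p` identifies the same limit with `∫ h ∂p`.

The chain rule along `z` is the fundamental theorem of calculus for absolutely continuous
functions: `ψ ∘ z` is absolutely continuous since `ψ` is Lipschitz on the compact image of `z`
and increments of `z` are dominated by those of the primitive of `‖z'‖`.
-/

open MeasureTheory Filter Set Topology
open scoped RealInnerProductSpace

theorem AbsolutelyContinuousOnInterval.of_dist_le_mul {X Y : Type*} [PseudoMetricSpace X]
    [PseudoMetricSpace Y] {f : ℝ → X} {g : ℝ → Y} {a b : ℝ} (K : ℝ)
    (hg : AbsolutelyContinuousOnInterval g a b)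
    (hfg : ∀ x ∈ uIcc a b, ∀ y ∈ uIcc a b, dist (f x) (f y) ≤ K * dist (g x) (g y)) :
    AbsolutelyContinuousOnInterval f a b := by
  unfold AbsolutelyContinuousOnInterval at hg ⊢
  refine squeeze_zero' (.of_forall fun E => Finset.sum_nonneg fun _ _ => dist_nonneg) ?_
    (mul_zero K ▸ hg.const_mul K)
  filter_upwards [eventually_inf_principal.mpr (.of_forall fun _ hE => hE)] with E hE
  rw [Finset.mul_sum]
  exact Finset.sum_le_sum fun i hi => hfg _ (hE.1 i hi).1 _ (hE.1 i hi).2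

section Primitive

variable {E : Type*} [NormedAddCommGroup E] [NormedSpace ℝ E] {f : ℝ → E} {a b : ℝ}

theorem IntervalIntegrable.dist_primitive_le (hf : IntervalIntegrable f volume a b)
    {x y : ℝ} (hx : x ∈ uIcc a b) (hy : y ∈ uIcc a b) :
    dist (∫ t in a..x, f t) (∫ t in a..y, f t) ≤
      dist (∫ t in a..x, ‖f t‖) (∫ t in a..y, ‖f t‖) := by
  have hax := hf.mono_set (uIcc_subset_uIcc_left hx)
  have hay := hf.mono_set (uIcc_subset_uIcc_left hy)
  rw [dist_eq_norm, Real.dist_eq, intervalIntegral.integral_interval_sub_left hax hay,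
    intervalIntegral.integral_interval_sub_left hax.norm hay.norm]
  exact intervalIntegral.norm_integral_le_abs_integral_norm

theorem LocallyLipschitz.absolutelyContinuousOnInterval_comp_primitive {X : Type*}
    [PseudoMetricSpace X] {ψ : E → X} (hψ : LocallyLipschitz ψ)
    (hf : IntervalIntegrable f volume a b) (x₀ : E) :
    AbsolutelyContinuousOnInterval (fun t => ψ (x₀ + ∫ s in a..t, f s)) a b := by
  set z : ℝ → E := fun t => x₀ + ∫ s in a..t, f s
  have hz : ContinuousOn z (uIcc a b) :=
    continuousOn_const.add (intervalIntegral.continuousOn_primitive_interval' hf left_mem_uIcc)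
  obtain ⟨K, hK⟩ := hψ.locallyLipschitzOn.exists_lipschitzOnWith_of_compact
    (isCompact_uIcc.image_of_continuousOn hz)
  refine .of_dist_le_mul K (hf.norm.absolutelyContinuousOnInterval_intervalIntegral left_mem_uIcc)
    fun x hx y hy => ?_
  calc dist (ψ (z x)) (ψ (z y)) ≤ K * dist (z x) (z y) :=
        hK.dist_le_mul _ (mem_image_of_mem z hx) _ (mem_image_of_mem z hy)
    _ ≤ K * dist (∫ t in a..x, ‖f t‖) (∫ t in a..y, ‖f t‖) := by
        rw [dist_add_left]
        exact mul_le_mul_of_nonneg_left (hf.dist_primitive_le hx hy) K.2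

theorem ContDiff.integral_fderiv_comp_eq_sub [CompleteSpace E] {ψ : E → ℝ} (hψ : ContDiff ℝ 1 ψ)
    (hf : IntervalIntegrable f volume a b) {z : ℝ → E}
    (hz : ∀ t ∈ uIcc a b, z t = z a + ∫ s in a..t, f s) :
    ∫ t in a..b, fderiv ℝ ψ (z t) (f t) = ψ (z b) - ψ (z a) := by
  have hac := hψ.locallyLipschitz.absolutelyContinuousOnInterval_comp_primitive hf (z a)
  have hFTC := hac.integral_deriv_eq_sub
  rw [intervalIntegral.integral_same, add_zero] at hFTC
  rw [intervalIntegral.integral_congr fun t ht => by rw [hz t ht], hz b right_mem_uIcc, ← hFTC]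
  refine intervalIntegral.integral_congr_ae ?_
  filter_upwards [hf.ae_hasDerivAt_integral] with t ht htab
  have hzt := (ht (uIoc_subset_uIcc htab) a left_mem_uIcc).const_add (z a)
  exact ((hψ.differentiable one_ne_zero _).hasFDerivAt.comp_hasDerivAt t hzt).deriv.symm

end Primitive

theorem ContDiff.continuous_gradient {E : Type*} [NormedAddCommGroup E] [InnerProductSpace ℝ E]
    [CompleteSpace E] {ψ : E → ℝ} (hψ : ContDiff ℝ 1 ψ) : Continuous (gradient ψ) :=
  (InnerProductSpace.toDual ℝ E).symm.continuous.comp (hψ.continuous_fderiv one_ne_zero)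

theorem MeasureTheory.ProbabilityMeasure.continuous_integral_of_continuous_uncurry
    {W X : Type*} [TopologicalSpace W] [CompactSpace W] [MeasurableSpace W]
    [OpensMeasurableSpace W] [TopologicalSpace X] {G : X → W → ℝ}
    (hG : Continuous (Function.uncurry G)) :
    Continuous fun q : ProbabilityMeasure W × X => ∫ w, G q.2 w ∂q.1 := by
  rw [continuous_iff_continuousAt]
  rintro ⟨ν₀, x₀⟩
  let Φ : C(X, C(W, ℝ)) := ContinuousMap.curry ⟨_, hG⟩
  have hΦ : Tendsto (fun q : ProbabilityMeasure W × X => ‖Φ q.2 - Φ x₀‖) (𝓝 (ν₀, x₀)) (𝓝 0) :=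
    tendsto_iff_norm_sub_tendsto_zero.1 ((Φ.continuous.comp continuous_snd).tendsto (ν₀, x₀))
  have hsmall : Tendsto (fun q : ProbabilityMeasure W × X => ∫ w, (Φ q.2 - Φ x₀) w ∂q.1)
      (𝓝 (ν₀, x₀)) (𝓝 0) := by
    refine squeeze_zero_norm (fun q => ?_) hΦ
    simpa using norm_integral_le_of_norm_le_const
      (μ := (q.1 : Measure W)) (.of_forall ((Φ q.2 - Φ x₀).norm_coe_le_norm))
  have hfixed := ((ProbabilityMeasure.continuous_integral_continuousMap (Φ x₀)).comp
    continuous_fst).tendsto (ν₀, x₀)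
  have hsum := hfixed.add hsmall
  rw [add_zero] at hsum
  refine hsum.congr fun q => ?_
  have hint : ∀ φ : C(W, ℝ), Integrable φ (q.1 : Measure W) := fun φ =>
    (BoundedContinuousFunction.mkOfCompact φ).integrable _
  rw [Function.comp_apply, ← integral_add (hint _) (hint _)]
  simp [Φ]

theorem stmt_9_general {n : ℕ} {U Y : Type*}
    [MetricSpace U] [CompactSpace U] [MeasurableSpace U] [BorelSpace U]
    [MetricSpace Y] [CompactSpace Y] [MeasurableSpace Y] [BorelSpace Y]
    [MeasurableSpace (ProbabilityMeasure (U × Y))]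
    (Z : Set (EuclideanSpace ℝ (Fin n))) (hZ : IsCompact Z)
    (g : U × Y × EuclideanSpace ℝ (Fin n) → EuclideanSpace ℝ (Fin n)) (hg : Continuous g)
    (gtil : ProbabilityMeasure (U × Y) → EuclideanSpace ℝ (Fin n) →
      EuclideanSpace ℝ (Fin n))
    (hgtil : ∀ ν zz, gtil ν zz = ∫ w : U × Y, g (w.1, w.2, zz) ∂ν.toMeasure)
    (μ : ℝ → ProbabilityMeasure (U × Y)) (z : ℝ → EuclideanSpace ℝ (Fin n))
    (hmemZ : ∀ t ≥ (0:ℝ), z t ∈ Z)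
    (hint : ∀ T : ℝ, IntervalIntegrable (fun t => gtil (μ t) (z t)) volume 0 T)
    (hode : ∀ T ≥ (0:ℝ), z T = z 0 + ∫ t in (0:ℝ)..T, gtil (μ t) (z t))
    (p : Measure (ProbabilityMeasure (U × Y) × EuclideanSpace ℝ (Fin n)))
    (hp : ∀ h : C(ProbabilityMeasure (U × Y) × EuclideanSpace ℝ (Fin n), ℝ),
      Tendsto (fun T : ℝ => (1 / T) * ∫ t in (0:ℝ)..T, h (μ t, z t)) atTop
        (nhds (∫ w, h w ∂p))) :
    ∀ ψ : EuclideanSpace ℝ (Fin n) → ℝ, ContDiff ℝ 1 ψ →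
      ∫ w, ⟪gradient ψ w.2, gtil w.1 w.2⟫ ∂p = 0 := by
  intro ψ hψ
  have hgrad := hψ.continuous_gradient
  have hh : Continuous fun q : ProbabilityMeasure (U × Y) × EuclideanSpace ℝ (Fin n) =>
      ⟪gradient ψ q.2, gtil q.1 q.2⟫ := by
    refine (ProbabilityMeasure.continuous_integral_of_continuous_uncurry
      (G := fun x w => ⟪gradient ψ x, g (w.1, w.2, x)⟫) (by fun_prop)).congr fun q => ?_
    rw [hgtil, integral_inner]
    exact (BoundedContinuousFunction.mkOfCompact ⟨_, hg.comp (by fun_prop)⟩).integrable _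
  let h : C(ProbabilityMeasure (U × Y) × EuclideanSpace ℝ (Fin n), ℝ) := ⟨_, hh⟩
  have hFTC : ∀ T ≥ (0:ℝ), ∫ t in (0:ℝ)..T, h (μ t, z t) = ψ (z T) - ψ (z 0) := fun T hT => by
    simp only [h, ContinuousMap.coe_mk, inner_gradient_left]
    exact hψ.integral_fderiv_comp_eq_sub (hint T) fun t ht => hode t (uIcc_of_le hT ▸ ht).1
  obtain ⟨B, hB⟩ := hZ.exists_bound_of_continuousOn hψ.continuous.continuousOn
  have hbdd : IsBoundedUnder (· ≤ ·) atTop fun T : ℝ => ‖ψ (z T) - ψ (z 0)‖ :=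
    isBoundedUnder_of_eventually_le (a := B + B) <| by
      filter_upwards [eventually_ge_atTop 0] with T hT
      exact (norm_sub_le _ _).trans (add_le_add (hB _ (hmemZ T hT)) (hB _ (hmemZ 0 le_rfl)))
  have hlim : Tendsto (fun T : ℝ => (1 / T) * ∫ t in (0:ℝ)..T, h (μ t, z t)) atTop (nhds 0) := by
    refine (tendsto_inv_atTop_zero.zero_mul_isBoundedUnder_le hbdd).congr' ?_
    filter_upwards [eventually_ge_atTop 0] with T hT
    rw [hFTC T hT, one_div]
  exact tendsto_nhds_unique (hp h) hlim

/-- The occupational measure generated by an admissible pair of the averaged system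
satisfies the linear constraints of the averaged IDLP problem. -/
theorem stmt_9 {n : ℕ} {U Y : Type*}
    [MetricSpace U] [CompactSpace U] [MeasurableSpace U] [BorelSpace U]
    [SecondCountableTopology U]
    [MetricSpace Y] [CompactSpace Y] [MeasurableSpace Y] [BorelSpace Y]
    [SecondCountableTopology Y]
    [MeasurableSpace (ProbabilityMeasure (U × Y))]
    [BorelSpace (ProbabilityMeasure (U × Y))]
    (Z : Set (EuclideanSpace ℝ (Fin n))) (hZ : IsCompact Z)
    (F : Set (ProbabilityMeasure (U × Y) × EuclideanSpace ℝ (Fin n))) (hF : IsCompact F)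
    (g : U × Y × EuclideanSpace ℝ (Fin n) → EuclideanSpace ℝ (Fin n)) (hg : Continuous g)
    (gtil : ProbabilityMeasure (U × Y) → EuclideanSpace ℝ (Fin n) →
      EuclideanSpace ℝ (Fin n))
    (hgtil : ∀ ν zz, gtil ν zz = ∫ w : U × Y, g (w.1, w.2, zz) ∂ν.toMeasure)
    (μ : ℝ → ProbabilityMeasure (U × Y)) (z : ℝ → EuclideanSpace ℝ (Fin n))
    (hμmeas : Measurable μ)
    (hmemZ : ∀ t ≥ (0:ℝ), z t ∈ Z)
    (hmemF : ∀ᵐ t ∂(volume.restrict (Ici (0:ℝ))), (μ t, z t) ∈ F)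
    (hint : ∀ T : ℝ, IntervalIntegrable (fun t => gtil (μ t) (z t)) volume 0 T)
    (hode : ∀ T ≥ (0:ℝ), z T = z 0 + ∫ t in (0:ℝ)..T, gtil (μ t) (z t))
    (p : Measure (ProbabilityMeasure (U × Y) × EuclideanSpace ℝ (Fin n)))
    [IsProbabilityMeasure p]
    (hp : ∀ h : C(ProbabilityMeasure (U × Y) × EuclideanSpace ℝ (Fin n), ℝ),
      Tendsto (fun T : ℝ => (1 / T) * ∫ t in (0:ℝ)..T, h (μ t, z t)) atTop
        (nhds (∫ w, h w ∂p))) :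
    ∀ ψ : EuclideanSpace ℝ (Fin n) → ℝ, ContDiff ℝ 1 ψ →
      ∫ w, ⟪gradient ψ w.2, gtil w.1 w.2⟫ ∂p = 0 :=
  stmt_9_general Z hZ g hg gtil hgtil μ z hmemZ hint hode p hp
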